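/- Let v1,v2,v3,v4 ∈ ℝ² form a convex quadrilateral in counterclockwise cyclic order. If p = (1−α)v1 + α v2 with α ∈ [0,1], then the vector φ = (1−α, α, 0, 0) satisfies the moment system M(p)φ = (1, p1, p2, 0); in particular, since M(p) is invertible, φ is its unique solution, so the moment coordinates are affine along the edge from v1 to v2. -/

import Mathlib

open Matrix

/-- Signed area of the triangle `(a,b,c)` in the plane. -/
noncomputable def sArea (a b c : EuclideanSpace ℝ (Fin 2)) : ℝ :=
  ((b 0 - a 0) * (c 1 - a 1) - (b 1 - a 1) * (c 0 - a 0)) / 2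

/-- `v` lists the vertices of a convex quadrilateral in counterclockwise cyclic order. -/
def ConvexCCW (v : Fin 4 → EuclideanSpace ℝ (Fin 2)) : Prop :=
  ∀ i : Fin 4, 0 < sArea (v i) (v (i + 1)) (v (i + 2))

/-- The moment system matrix `M(p)`: rows `(1,1,1,1)`, the two coordinate rows of the
vertices, and `(d₁(p), -d₂(p), d₃(p), -d₄(p))` where `dᵢ(p) = ‖p - vᵢ‖`. -/
noncomputable def momentMatrix (v : Fin 4 → EuclideanSpace ℝ (Fin 2))
    (p : EuclideanSpace ℝ (Fin 2)) : Matrix (Fin 4) (Fin 4) ℝ :=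
  Matrix.of ![fun i => 1, fun i => v i 0, fun i => v i 1,
              ![‖p - v 0‖, -‖p - v 1‖, ‖p - v 2‖, -‖p - v 3‖]]

/-! On the edge, `d₁(p) = α‖v₂ - v₁‖` and `d₂(p) = (1 - α)‖v₂ - v₁‖` while `φ` vanishes on
`v₃, v₄`, so the distance equation of `M(p)φ` cancels and the other three are the barycentric
identities for `p`. For uniqueness, expanding `det M(p)` along the distance row gives
`-2 ∑ᵢ dᵢ(p) S(vᵢ₊₁, vᵢ₊₂, vᵢ₊₃)`: convexity makes all four areas positive and the distances
cannot all vanish, so `M(p)` is invertible for every `p`. (Vertices are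
numbered 1–4 here, `v 0, …, v 3` in Lean.) -/

lemma sArea_self_left (a c : EuclideanSpace ℝ (Fin 2)) : sArea a a c = 0 := by
  simp [sArea]

theorem det_momentMatrix (v : Fin 4 → EuclideanSpace ℝ (Fin 2)) (p : EuclideanSpace ℝ (Fin 2)) :
    (momentMatrix v p).det =
      -2 * ∑ i, ‖p - v i‖ * sArea (v (i + 1)) (v (i + 2)) (v (i + 3)) := by
  rw [det_succ_row_zero]
  simp [Fin.sum_univ_succ, det_fin_three, momentMatrix, sArea, Fin.succAbove]
  ring

theorem ConvexCCW.det_momentMatrix_neg {v : Fin 4 → EuclideanSpace ℝ (Fin 2)} (hv : ConvexCCW v)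
    (p : EuclideanSpace ℝ (Fin 2)) : (momentMatrix v p).det < 0 := by
  have harea (i : Fin 4) : 0 < sArea (v (i + 1)) (v (i + 2)) (v (i + 3)) := by
    simpa only [add_assoc, show (1 : Fin 4) + 1 = 2 from rfl, show (1 : Fin 4) + 2 = 3 from rfl]
      using hv (i + 1)
  have hv01 : v 0 ≠ v 1 := fun h => by simpa [h, sArea_self_left] using hv 0
  have hdist : ∃ i, 0 < ‖p - v i‖ := by
    by_cases hp : p = v 0
    · exact ⟨1, by simpa [hp, sub_eq_zero] using hv01⟩
    · exact ⟨0, by simpa [sub_eq_zero] using hp⟩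
  obtain ⟨k, hk⟩ := hdist
  have hsum : 0 < ∑ i, ‖p - v i‖ * sArea (v (i + 1)) (v (i + 2)) (v (i + 3)) :=
    Finset.sum_pos' (fun j _ => mul_nonneg (norm_nonneg _) (harea j).le)
      ⟨k, Finset.mem_univ k, mul_pos hk (harea k)⟩
  rw [det_momentMatrix]
  linarith

theorem ConvexCCW.mulVec_momentMatrix_injective {v : Fin 4 → EuclideanSpace ℝ (Fin 2)}
    (hv : ConvexCCW v) (p : EuclideanSpace ℝ (Fin 2)) :
    Function.Injective (momentMatrix v p).mulVec :=
  mulVec_injective_iff_isUnit.2 <|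
    (isUnit_iff_isUnit_det _).2 (hv.det_momentMatrix_neg p).ne.isUnit

theorem momentMatrix_mulVec_edge (v : Fin 4 → EuclideanSpace ℝ (Fin 2)) {α : ℝ}
    (hα : α ∈ Set.Icc (0 : ℝ) 1) {p : EuclideanSpace ℝ (Fin 2)}
    (hp : p = (1 - α) • v 0 + α • v 1) :
    (momentMatrix v p).mulVec ![1 - α, α, 0, 0] = ![1, p 0, p 1, 0] := by
  have hd0 : ‖p - v 0‖ = α * ‖v 1 - v 0‖ := by
    rw [show p - v 0 = α • (v 1 - v 0) by rw [hp]; module, norm_smul, Real.norm_of_nonneg hα.1]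
  have hd1 : ‖p - v 1‖ = (1 - α) * ‖v 1 - v 0‖ := by
    rw [show p - v 1 = (1 - α) • (v 0 - v 1) by rw [hp]; module, norm_smul,
      Real.norm_of_nonneg (sub_nonneg.2 hα.2), norm_sub_rev]
  have hcoord (j : Fin 2) : p j = (1 - α) * v 0 j + α * v 1 j := by simp [hp]
  ext i
  fin_cases i <;>
    simp [momentMatrix, mulVec, dotProduct, Fin.sum_univ_four, hd0, hd1, hcoord] <;> ring

/-- If `p = (1-α)v₁ + αv₂` with `α ∈ [0,1]` lies on the edge from `v₁` to
`v₂` of a convex quadrilateral (counterclockwise order), then `φ = (1-α, α, 0, 0)`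
solves the moment system `M(p)φ = (1, p₁, p₂, 0)`, and it is the unique solution. -/
theorem moment_coordinates_edge (v : Fin 4 → EuclideanSpace ℝ (Fin 2))
    (hccw : ConvexCCW v) (α : ℝ) (hα : α ∈ Set.Icc (0 : ℝ) 1)
    (p : EuclideanSpace ℝ (Fin 2)) (hp : p = (1 - α) • v 0 + α • v 1) :
    (momentMatrix v p).mulVec ![1 - α, α, 0, 0] = ![1, p 0, p 1, 0] ∧
    ∀ φ : Fin 4 → ℝ, (momentMatrix v p).mulVec φ = ![1, p 0, p 1, 0] →
      φ = ![1 - α, α, 0, 0] := by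
  have hsol := momentMatrix_mulVec_edge v hα hp
  exact ⟨hsol, fun φ hφ => hccw.mulVec_momentMatrix_injective _ (hφ.trans hsol.symm)⟩
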